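/- Let n ≥ 1 and let F be the free group on the 2n generators x_1, y_1, …, x_n, y_n (e.g. FreeGroup (Fin (2n))). Let r = [x_1,y_1]·[x_2,y_2]⋯[x_n,y_n] be the product of the commutators [x_i,y_i] = x_i y_i x_i^{-1} y_i^{-1} (the relator of the standard presentation of the fundamental group of the closed orientable surface of genus n). Then r lies in the commutator subgroup γ_2(F) = lowerCentralSeries F 1, and the image of r in the abelian quotient γ_2(F)/γ_3(F) (the quotient of lowerCentralSeries F 1 by the normal subgroup lowerCentralSeries F 2) is non-trivial and is not a proper power: there is no element g of γ_2(F)/γ_3(F) and no integer k ≥ 2 with [r] = g^k. In particular r ∉ γ_3(F). -/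

import Mathlib

open scoped commutatorElement

/-!
Map the free group onto the integral Heisenberg group by sending one handle `x_j, y_j` to the
standard generators `X, Y` and the other generators to `1`. The Heisenberg group has class 2 and
its commutator subgroup is the centre `{(0, 0, c)}`, so the central coordinate `c` induces a
homomorphism `γ₂(F)/γ₃(F) → ℤ`. Exactly one factor of the relator survives, namely
`⁅X, Y⁆ = (0, 0, 1)`, so the class of the relator is sent to the generator `1` of `ℤ`; such an
element is neither trivial nor a proper power.
-/

@[ext] structure Heisenberg where
  a : ℤ
  b : ℤ
  c : ℤ

namespace Heisenberg

/-- The upper unitriangular matrix `[[1, a, c], [0, 1, b], [0, 0, 1]]` written as `(a, b, c)`. -/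
instance : Mul Heisenberg := ⟨fun x y => ⟨x.a + y.a, x.b + y.b, x.c + y.c + x.a * y.b⟩⟩
instance : One Heisenberg := ⟨⟨0, 0, 0⟩⟩
instance : Inv Heisenberg := ⟨fun x => ⟨-x.a, -x.b, -x.c + x.a * x.b⟩⟩

@[simp] lemma mul_a (x y : Heisenberg) : (x * y).a = x.a + y.a := rfl
@[simp] lemma mul_b (x y : Heisenberg) : (x * y).b = x.b + y.b := rfl
@[simp] lemma mul_c (x y : Heisenberg) : (x * y).c = x.c + y.c + x.a * y.b := rfl
@[simp] lemma one_a : (1 : Heisenberg).a = 0 := rfl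
@[simp] lemma one_b : (1 : Heisenberg).b = 0 := rfl
@[simp] lemma one_c : (1 : Heisenberg).c = 0 := rfl
@[simp] lemma inv_a (x : Heisenberg) : x⁻¹.a = -x.a := rfl
@[simp] lemma inv_b (x : Heisenberg) : x⁻¹.b = -x.b := rfl
@[simp] lemma inv_c (x : Heisenberg) : x⁻¹.c = -x.c + x.a * x.b := rfl

instance : Group Heisenberg where
  mul_assoc x y z := by ext <;> simp <;> ring
  one_mul x := by ext <;> simp
  mul_one x := by ext <;> simp
  inv_mul_cancel x := by ext <;> simp

def X : Heisenberg := ⟨1, 0, 0⟩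
def Y : Heisenberg := ⟨0, 1, 0⟩

lemma commutatorElement_X_Y : ⁅X, Y⁆ = ⟨0, 0, 1⟩ := rfl

def abelianization : Heisenberg →* Multiplicative (ℤ × ℤ) where
  toFun x := Multiplicative.ofAdd (x.a, x.b)
  map_one' := rfl
  map_mul' _ _ := rfl

lemma a_eq_zero_and_b_eq_zero_of_mem_commutator {x : Heisenberg}
    (hx : x ∈ commutator Heisenberg) : x.a = 0 ∧ x.b = 0 := by
  have h := Abelianization.commutator_subset_ker abelianization hx
  rw [MonoidHom.mem_ker] at h
  exact Prod.ext_iff.mp (congrArg Multiplicative.toAdd h)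

lemma commutator_le_center : commutator Heisenberg ≤ Subgroup.center Heisenberg := by
  intro x hx
  obtain ⟨ha, hb⟩ := a_eq_zero_and_b_eq_zero_of_mem_commutator hx
  rw [Subgroup.mem_center_iff]
  intro y
  ext <;> simp [ha, hb, add_comm]

lemma top_lowerCentralSeries_two_eq_bot : (⊤ : Subgroup Heisenberg).lowerCentralSeries 2 = ⊥ :=
  Subgroup.lowerCentralSeries_succ_eq_bot _
    (Subgroup.top_lowerCentralSeries_one (G := Heisenberg) ▸ commutator_le_center)

end Heisenberg

section LowerCentralQuotient

variable {G : Type*} [Group G]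

abbrev lowerCentralQuotient (G : Type*) [Group G] : Type _ :=
  (⊤ : Subgroup G).lowerCentralSeries 1 ⧸
    ((⊤ : Subgroup G).lowerCentralSeries 2).subgroupOf ((⊤ : Subgroup G).lowerCentralSeries 1)

lemma map_mem_top_lowerCentralSeries {H : Type*} [Group H] (φ : G →* H) {x : G} {m : ℕ}
    (hx : x ∈ (⊤ : Subgroup G).lowerCentralSeries m) :
    φ x ∈ (⊤ : Subgroup H).lowerCentralSeries m := by
  have hmap := Subgroup.mem_map_of_mem φ hx
  rw [Subgroup.map_lowerCentralSeries] at hmap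
  exact Subgroup.lowerCentralSeries_mono m le_top hmap

def centralCoord (φ : G →* Heisenberg) :
    (⊤ : Subgroup G).lowerCentralSeries 1 →* Multiplicative ℤ where
  toFun x := Multiplicative.ofAdd (φ x).c
  map_one' := by simp
  map_mul' x y := by
    have hx : (φ x).a = 0 := (Heisenberg.a_eq_zero_and_b_eq_zero_of_mem_commutator
      (Subgroup.top_lowerCentralSeries_one (G := Heisenberg) ▸
        map_mem_top_lowerCentralSeries φ x.2)).1
    change Multiplicative.ofAdd (φ (x * y : G)).c = _
    rw [map_mul, Heisenberg.mul_c, hx, zero_mul, add_zero, ofAdd_add]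

lemma subgroupOf_lowerCentralSeries_two_le_ker_centralCoord (φ : G →* Heisenberg) :
    ((⊤ : Subgroup G).lowerCentralSeries 2).subgroupOf ((⊤ : Subgroup G).lowerCentralSeries 1) ≤
      (centralCoord φ).ker := by
  intro x hx
  have h : φ x ∈ (⊤ : Subgroup Heisenberg).lowerCentralSeries 2 :=
    map_mem_top_lowerCentralSeries φ hx
  rw [Heisenberg.top_lowerCentralSeries_two_eq_bot, Subgroup.mem_bot] at h
  change Multiplicative.ofAdd (φ x).c = 1
  rw [h]
  rfl

def lowerCentralQuotientCoord (φ : G →* Heisenberg) : lowerCentralQuotient G →* Multiplicative ℤ :=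
  QuotientGroup.lift _ (centralCoord φ) (subgroupOf_lowerCentralSeries_two_le_ker_centralCoord φ)

lemma lowerCentralQuotientCoord_mk (φ : G →* Heisenberg)
    (x : (⊤ : Subgroup G).lowerCentralSeries 1) :
    lowerCentralQuotientCoord φ (QuotientGroup.mk x) = Multiplicative.ofAdd (φ x).c :=
  rfl

end LowerCentralQuotient

section ProperPower

variable {A : Type*} [Group A]

def IsProperPower (x : A) : Prop := ∃ (g : A) (k : ℤ), 2 ≤ k ∧ x = g ^ k

lemma ne_one_of_map_eq_ofAdd_one (χ : A →* Multiplicative ℤ) {x : A}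
    (hx : χ x = Multiplicative.ofAdd 1) : x ≠ 1 := by
  rintro rfl
  rw [map_one] at hx
  exact one_ne_zero (congrArg Multiplicative.toAdd hx).symm

lemma not_isProperPower_of_map_eq_ofAdd_one (χ : A →* Multiplicative ℤ) {x : A}
    (hx : χ x = Multiplicative.ofAdd 1) : ¬ IsProperPower x := by
  rintro ⟨g, k, hk, rfl⟩
  have hdvd : k ∣ 1 := ⟨Multiplicative.toAdd (χ g), by
    simpa [toAdd_zpow] using (congrArg Multiplicative.toAdd hx).symm⟩
  have := Int.le_of_dvd one_pos hdvd
  omega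

end ProperPower

lemma List.prod_ofFn_eq_of_forall_ne {M : Type*} [Monoid M] :
    ∀ {n : ℕ} (f : Fin n → M) (j : Fin n), (∀ i ≠ j, f i = 1) → (List.ofFn f).prod = f j
  | _ + 1, f, j, h => by
    rw [List.ofFn_succ, List.prod_cons]
    cases j using Fin.cases with
    | zero =>
      rw [List.prod_eq_one, mul_one]
      simpa [List.mem_ofFn] using fun i => h i.succ (Fin.succ_ne_zero i)
    | succ j =>
      rw [h 0 (Fin.succ_ne_zero j).symm, one_mul,
        List.prod_ofFn_eq_of_forall_ne (fun i => f i.succ) j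
          fun i hi => h i.succ (Fin.succ_injective _ |>.ne hi)]

section SurfaceRelator

variable {n : ℕ}

def surfaceRelator (n : ℕ) : FreeGroup (Fin n ⊕ Fin n) :=
  (List.ofFn fun i : Fin n =>
    ⁅(FreeGroup.of (Sum.inl i) : FreeGroup (Fin n ⊕ Fin n)), FreeGroup.of (Sum.inr i)⁆).prod

lemma surfaceRelator_mem_lowerCentralSeries_one :
    surfaceRelator n ∈ (⊤ : Subgroup (FreeGroup (Fin n ⊕ Fin n))).lowerCentralSeries 1 := by
  rw [Subgroup.top_lowerCentralSeries_one, commutator_def]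
  refine Subgroup.list_prod_mem _ fun x hx => ?_
  obtain ⟨i, rfl⟩ := List.mem_ofFn.mp hx
  exact Subgroup.commutator_mem_commutator (Subgroup.mem_top _) (Subgroup.mem_top _)

def handleEval (j : Fin n) : FreeGroup (Fin n ⊕ Fin n) →* Heisenberg :=
  FreeGroup.lift fun
    | .inl i => if i = j then Heisenberg.X else 1
    | .inr i => if i = j then Heisenberg.Y else 1

lemma handleEval_surfaceRelator (j : Fin n) : handleEval j (surfaceRelator n) = ⟨0, 0, 1⟩ := by
  rw [surfaceRelator, map_list_prod, List.map_ofFn,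
    List.prod_ofFn_eq_of_forall_ne _ j fun i hi => by simp [handleEval, hi]]
  simp [handleEval, Heisenberg.commutatorElement_X_Y]

end SurfaceRelator

/-- The surface relator `r = [x₁,y₁]⋯[xₙ,yₙ]` in the free group on `2n`
generators lies in `γ₂(F) = lowerCentralSeries F 1`, its image in the abelian
quotient `γ₂(F)/γ₃(F)` is non-trivial and not a proper power, and in
particular `r ∉ γ₃(F) = lowerCentralSeries F 2`. -/
theorem surface_relator_primitive (n : ℕ) (hn : 1 ≤ n)
    (r : FreeGroup (Fin n ⊕ Fin n))
    (hr : r = (List.ofFn (fun i : Fin n =>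
      ⁅(FreeGroup.of (Sum.inl i) : FreeGroup (Fin n ⊕ Fin n)),
        FreeGroup.of (Sum.inr i)⁆)).prod) :
    ∃ hmem : r ∈ (⊤ : Subgroup (FreeGroup (Fin n ⊕ Fin n))).lowerCentralSeries 1,
      ((QuotientGroup.mk (⟨r, hmem⟩ : (⊤ : Subgroup (FreeGroup (Fin n ⊕ Fin n))).lowerCentralSeries 1) :
          ((⊤ : Subgroup (FreeGroup (Fin n ⊕ Fin n))).lowerCentralSeries 1) ⧸
            (((⊤ : Subgroup (FreeGroup (Fin n ⊕ Fin n))).lowerCentralSeries 2).subgroupOf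
              ((⊤ : Subgroup (FreeGroup (Fin n ⊕ Fin n))).lowerCentralSeries 1))) ≠ 1 ∧
        (¬ ∃ (g : ((⊤ : Subgroup (FreeGroup (Fin n ⊕ Fin n))).lowerCentralSeries 1) ⧸
            (((⊤ : Subgroup (FreeGroup (Fin n ⊕ Fin n))).lowerCentralSeries 2).subgroupOf
              ((⊤ : Subgroup (FreeGroup (Fin n ⊕ Fin n))).lowerCentralSeries 1))) (k : ℤ),
          2 ≤ k ∧
            (QuotientGroup.mk (⟨r, hmem⟩ : (⊤ : Subgroup (FreeGroup (Fin n ⊕ Fin n))).lowerCentralSeries 1)) = g ^ k) ∧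
        r ∉ (⊤ : Subgroup (FreeGroup (Fin n ⊕ Fin n))).lowerCentralSeries 2) := by
  subst hr
  let φ := handleEval (⟨0, hn⟩ : Fin n)
  have hmem := surfaceRelator_mem_lowerCentralSeries_one (n := n)
  have hcoord : lowerCentralQuotientCoord φ (QuotientGroup.mk ⟨_, hmem⟩) =
      Multiplicative.ofAdd 1 := by
    rw [lowerCentralQuotientCoord_mk, handleEval_surfaceRelator]
  have hne := ne_one_of_map_eq_ofAdd_one _ hcoord
  refine ⟨hmem, hne, not_isProperPower_of_map_eq_ofAdd_one _ hcoord, fun h3 => hne ?_⟩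
  exact (QuotientGroup.eq_one_iff _).mpr (Subgroup.mem_subgroupOf.mpr h3)
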